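/- arXiv:2409.06432 — 7 statements merged into one kernel-verified Lean document; each statement's English description precedes it below -/
import Mathlib

section
/- The function F(p) = Ψ(1+1/p) − Ψ(1+3/p) is strictly increasing on the interval (2,∞), where Ψ = (ln Γ)' is the Digamma function. -/
open Real Set

/-- The Digamma function `Ψ = (ln Γ)'`. -/
noncomputable def digamma (x : ℝ) : ℝ := deriv (fun y => Real.log (Real.Gamma y)) x

/-!
The recurrence `Ψ(x + 1) = Ψ(x) + 1 / x` telescopes to `Ψ(x + n) = Ψ(x) + ∑_{m < n} 1 / (x + m)`,
and convexity of `log Γ` squeezes `Ψ(x + n)` between `log (x + n - 1)` and `log (x + n)`, so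
`Ψ(x + n) - log n → 0`. Hence `Ψ(y) - Ψ(x) = ∑_m (1 / (x + m) - 1 / (y + m))`, and
`F(p) = -∑_m 2p / (((m + 1)p + 1)((m + 1)p + 3))`, whose terms all decrease in `p` once `p ≥ √3`.
-/

open Filter Topology Finset

lemma differentiableAt_log_Gamma {x : ℝ} (hx : 0 < x) :
    DifferentiableAt ℝ (fun y => log (Gamma y)) x :=
  (differentiableAt_Gamma fun m => by linarith [(m.cast_nonneg : (0 : ℝ) ≤ m)]).log
    (Gamma_pos_of_pos hx).ne'

lemma log_Gamma_add_one {x : ℝ} (hx : 0 < x) : log (Gamma (x + 1)) = log (Gamma x) + log x := by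
  rw [Gamma_add_one hx.ne', log_mul hx.ne' (Gamma_pos_of_pos hx).ne', add_comm]

lemma digamma_add_one {x : ℝ} (hx : 0 < x) : digamma (x + 1) = digamma x + 1 / x := by
  have hshift : digamma (x + 1) = deriv (fun y => log (Gamma (y + 1))) x :=
    (deriv_comp_add_const (fun y => log (Gamma y)) 1 x).symm
  rw [hshift, one_div, ← deriv_log, digamma,
    ← deriv_add (differentiableAt_log_Gamma hx) (differentiableAt_log hx.ne')]
  refine EventuallyEq.deriv_eq ?_
  filter_upwards [eventually_gt_nhds hx] with y hy
  exact log_Gamma_add_one hy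

lemma digamma_add_nat {x : ℝ} (hx : 0 < x) (n : ℕ) :
    digamma (x + n) = digamma x + ∑ m ∈ range n, 1 / (x + m) := by
  induction n with
  | zero => simp
  | succ n ih =>
    rw [Nat.cast_succ, ← add_assoc, digamma_add_one (by positivity), ih, sum_range_succ, add_assoc]

lemma log_le_digamma_add_one {x : ℝ} (hx : 0 < x) : log x ≤ digamma (x + 1) := by
  have h := convexOn_log_Gamma.slope_le_deriv (mem_Ioi.mpr hx) (mem_Ioi.mpr (by linarith))
    (lt_add_one x) (differentiableAt_log_Gamma (by linarith))
  rwa [slope_def_field, add_sub_cancel_left, div_one, Function.comp_apply, Function.comp_apply,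
    log_Gamma_add_one hx, add_sub_cancel_left] at h

lemma digamma_le_log {x : ℝ} (hx : 0 < x) : digamma x ≤ log x := by
  have h := convexOn_log_Gamma.deriv_le_slope (mem_Ioi.mpr hx) (mem_Ioi.mpr (by linarith))
    (lt_add_one x) (differentiableAt_log_Gamma hx)
  rwa [slope_def_field, add_sub_cancel_left, div_one, Function.comp_apply, Function.comp_apply,
    log_Gamma_add_one hx, add_sub_cancel_left] at h

lemma tendsto_digamma_add_nat_sub_log {x : ℝ} (hx : 0 < x) :
    Tendsto (fun n : ℕ => digamma (x + n) - log n) atTop (𝓝 0) := by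
  have hlog (c : ℝ) : Tendsto (fun n : ℕ => log (n + c) - log n) atTop (𝓝 0) :=
    (tendsto_log_comp_add_sub_log c).comp tendsto_natCast_atTop_atTop
  refine tendsto_of_tendsto_of_tendsto_of_le_of_le' (hlog (x - 1)) (hlog x) ?_ ?_ <;>
    filter_upwards [eventually_ge_atTop 1] with n hn <;>
    have hn' : (1 : ℝ) ≤ n := by exact_mod_cast hn
  · have h := log_le_digamma_add_one (x := x + n - 1) (by linarith)
    rw [sub_add_cancel] at h
    rw [show (n : ℝ) + (x - 1) = x + n - 1 by ring]
    linarith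
  · have h := digamma_le_log (x := x + n) (by linarith)
    rw [add_comm (n : ℝ) x]
    linarith

lemma hasSum_digamma_sub_digamma {x y : ℝ} (hx : 0 < x) (hxy : x ≤ y) :
    HasSum (fun m : ℕ => 1 / (x + m) - 1 / (y + m)) (digamma y - digamma x) := by
  have hy : 0 < y := hx.trans_le hxy
  refine (hasSum_iff_tendsto_nat_of_nonneg (fun m => sub_nonneg.mpr ?_) _).mpr ?_
  · exact one_div_le_one_div_of_le (by positivity) (by linarith)
  have hpartial (n : ℕ) : ∑ m ∈ range n, (1 / (x + m) - 1 / (y + m)) =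
      digamma y - digamma x + ((digamma (x + n) - log n) - (digamma (y + n) - log n)) := by
    rw [sum_sub_distrib, digamma_add_nat hx, digamma_add_nat hy]
    ring
  simp only [hpartial]
  simpa using tendsto_const_nhds.add
    ((tendsto_digamma_add_nat_sub_log hx).sub (tendsto_digamma_add_nat_sub_log hy))

lemma strictAntiOn_one_div_add_sub_one_div_add (m : ℕ) :
    StrictAntiOn (fun p : ℝ => 1 / (1 + 1 / p + m) - 1 / (1 + 3 / p + m)) (Ici √3) := by
  have h3 : (0 : ℝ) < √3 := by positivity
  have hclosed {p : ℝ} (hp : 0 < p) : 1 / (1 + 1 / p + m) - 1 / (1 + 3 / p + m) =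
      2 * p / (((m + 1) * p + 1) * ((m + 1) * p + 3)) := by
    field_simp
    ring
  intro p hp q hq hpq
  simp only [Set.mem_Ici] at hp hq
  have hp0 : 0 < p := h3.trans_le hp
  have hq0 : 0 < q := h3.trans_le hq
  dsimp only
  rw [hclosed hp0, hclosed hq0, div_lt_div_iff₀ (by positivity) (by positivity)]
  have hpq3 : 3 < p * q := by nlinarith [sq_sqrt (show (0 : ℝ) ≤ 3 by norm_num)]
  have hk : p * q ≤ (m + 1) ^ 2 * (p * q) :=
    le_mul_of_one_le_left (by positivity) (one_le_pow₀ (by linarith [m.cast_nonneg (α := ℝ)]))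
  -- the cross-multiplied difference factors as `2 (q - p) ((m + 1)² p q - 3)`
  nlinarith [mul_pos (sub_pos.mpr hpq) (show 0 < (m + 1) ^ 2 * (p * q) - 3 by linarith)]

theorem stmt1 :
    StrictMonoOn (fun p : ℝ => digamma (1 + 1 / p) - digamma (1 + 3 / p)) (Ioi 2) := by
  intro p hp q hq hpq
  have hsum {r : ℝ} (hr : 0 < r) :=
    hasSum_digamma_sub_digamma (x := 1 + 1 / r) (y := 1 + 3 / r) (by positivity)
      (by gcongr; norm_num)
  have hsqrt : Ioi (2 : ℝ) ⊆ Ici √3 := fun r hr =>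
    ((sqrt_le_left zero_le_two).mpr (by norm_num)).trans hr.le
  have hterm (m : ℕ) := strictAntiOn_one_div_add_sub_one_div_add m (hsqrt hp) (hsqrt hq) hpq
  have hlt := hasSum_lt (fun m => (hterm m).le) (hterm 0)
    (hsum (zero_lt_two.trans hq)) (hsum (zero_lt_two.trans hp))
  dsimp only
  linarith
end

section
/- For all p ≥ √3, one has 3·Ψ'(1+3/p) − Ψ'(1+1/p) > 0, where Ψ' is the Trigamma function. -/
open Real

/-- The Trigamma function `Ψ'`, the derivative of the Digamma function. -/
noncomputable def trigamma (x : ℝ) : ℝ := deriv digamma x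

/-!
Differentiating the Weierstrass product `log Γ x = -log x - γ x + ∑ₖ (x/(k+1) - log (1 + x/(k+1)))`
termwise twice gives `Ψ'(x) = ∑_{n ≥ 0} 1/(x+n)²`. Since
`c (n + b)² - (n + c b)² = (c - 1) (n² - c b²)`, for `c > 1` and `c b² ≤ 1` every term of
`c Ψ'(1 + c b)` dominates the corresponding term of `Ψ'(1 + b)`, strictly for `n = 2`;
take `c = 3`, `b = 1/p`.
-/

open Filter Topology Finset
open scoped Nat

lemma summable_one_div_nat_add_one_sq : Summable fun k : ℕ => 1 / ((k : ℝ) + 1) ^ 2 :=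
  ((summable_nat_add_iff 1).mpr (summable_one_div_nat_pow.mpr one_lt_two)).congr
    fun k => by push_cast; rfl

lemma one_div_add_sq_le_one_div_sq {x : ℝ} (hx : 0 ≤ x) (k : ℕ) :
    1 / (x + (k + 1)) ^ 2 ≤ 1 / ((k : ℝ) + 1) ^ 2 :=
  one_div_le_one_div_of_le (by positivity) (pow_le_pow_left₀ (by positivity) (by linarith) 2)

lemma sub_log_one_add_nonneg {t : ℝ} (ht : 0 ≤ t) : 0 ≤ t - log (1 + t) := by
  linarith [log_le_sub_one_of_pos (by linarith : 0 < 1 + t)]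

lemma sub_log_one_add_le_sq {t : ℝ} (ht : 0 ≤ t) : t - log (1 + t) ≤ t ^ 2 := by
  have hlog := one_sub_inv_le_log_of_pos (by linarith : 0 < 1 + t)
  have hinv : 1 - (1 + t)⁻¹ = t - t ^ 2 / (1 + t) := by field_simp; ring
  have hdiv : t ^ 2 / (1 + t) ≤ t ^ 2 := div_le_self (sq_nonneg t) (by linarith)
  linarith

noncomputable def logGammaTerm (k : ℕ) (x : ℝ) : ℝ := x / (k + 1) - log (1 + x / (k + 1))

noncomputable def digammaTerm (k : ℕ) (x : ℝ) : ℝ := 1 / (k + 1) - 1 / (x + (k + 1))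

lemma logGammaTerm_nonneg {x : ℝ} (hx : 0 ≤ x) (k : ℕ) : 0 ≤ logGammaTerm k x :=
  sub_log_one_add_nonneg (by positivity)

lemma logGammaTerm_le {x : ℝ} (hx : 0 ≤ x) (k : ℕ) :
    logGammaTerm k x ≤ x ^ 2 * (1 / ((k : ℝ) + 1) ^ 2) :=
  (sub_log_one_add_le_sq (by positivity)).trans_eq (by field_simp)

lemma summable_logGammaTerm {x : ℝ} (hx : 0 ≤ x) : Summable fun k => logGammaTerm k x :=
  .of_nonneg_of_le (logGammaTerm_nonneg hx) (logGammaTerm_le hx)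
    (summable_one_div_nat_add_one_sq.mul_left _)

lemma logGammaTerm_eq {x : ℝ} (hx : 0 ≤ x) (k : ℕ) :
    logGammaTerm k x = x * (1 / ((k : ℝ) + 1)) - (log (x + (k + 1)) - log ((k : ℝ) + 1)) := by
  rw [logGammaTerm, ← log_div (by positivity) (by positivity)]
  congr 2
  · field_simp
  · field_simp; ring

lemma hasDerivAt_logGammaTerm {x : ℝ} {k : ℕ} (hx : x + (k + 1) ≠ 0) :
    HasDerivAt (logGammaTerm k) (digammaTerm k x) x := by
  have hk : (k : ℝ) + 1 ≠ 0 := by positivity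
  have hlin : HasDerivAt (fun y : ℝ => y / (k + 1)) (1 / ((k : ℝ) + 1)) x := by
    simpa using (hasDerivAt_id x).div_const ((k : ℝ) + 1)
  have hne : 1 + x / ((k : ℝ) + 1) ≠ 0 := by
    rwa [one_add_div hk, div_ne_zero_iff, add_comm, and_iff_left hk]
  refine (hlin.fun_sub ((hlin.const_add 1).log hne)).congr_deriv ?_
  rw [digammaTerm, one_add_div hk, div_div_div_cancel_right₀ hk, add_comm (k : ℝ) 1, add_comm x]

lemma digammaTerm_nonneg {x : ℝ} (hx : 0 ≤ x) (k : ℕ) : 0 ≤ digammaTerm k x :=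
  sub_nonneg.mpr (one_div_le_one_div_of_le (by positivity) (by linarith))

lemma digammaTerm_le {x : ℝ} (hx : 0 ≤ x) (k : ℕ) :
    digammaTerm k x ≤ x * (1 / ((k : ℝ) + 1) ^ 2) := by
  have hk : (0 : ℝ) < k + 1 := by positivity
  rw [digammaTerm, div_sub_div _ _ hk.ne' (by positivity), mul_one_div,
    div_le_div_iff₀ (by positivity) (by positivity)]
  nlinarith [mul_nonneg hx hx, mul_nonneg hx hk.le]

lemma summable_digammaTerm {x : ℝ} (hx : 0 ≤ x) : Summable fun k => digammaTerm k x :=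
  .of_nonneg_of_le (digammaTerm_nonneg hx) (digammaTerm_le hx)
    (summable_one_div_nat_add_one_sq.mul_left _)

lemma hasDerivAt_digammaTerm {x : ℝ} {k : ℕ} (hx : x + (k + 1) ≠ 0) :
    HasDerivAt (digammaTerm k) (1 / (x + (k + 1)) ^ 2) x := by
  change HasDerivAt (fun y => 1 / ((k : ℝ) + 1) - 1 / (y + (k + 1))) _ x
  simpa [one_div, neg_div] using
    (((hasDerivAt_id x).add_const ((k : ℝ) + 1)).inv hx).const_sub ((k : ℝ) + 1)⁻¹

lemma logGammaSeq_eq {x : ℝ} (hx : 0 ≤ x) (n : ℕ) :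
    BohrMollerup.logGammaSeq x n =
      -log x + ∑ k ∈ range n, logGammaTerm k x - x * ((harmonic n : ℝ) - log n) := by
  have hfact : log (n ! : ℝ) = ∑ k ∈ range n, log ((k : ℝ) + 1) := by
    rw [← prod_range_add_one_eq_factorial, Nat.cast_prod, log_prod fun i _ => by positivity]
    push_cast; rfl
  have hharm : (harmonic n : ℝ) = ∑ k ∈ range n, 1 / ((k : ℝ) + 1) := by
    simp [harmonic]
  rw [BohrMollerup.logGammaSeq, sum_range_succ', hfact, hharm,
    sum_congr rfl fun k _ => logGammaTerm_eq hx k]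
  simp only [sum_sub_distrib, ← mul_sum, Nat.cast_add, Nat.cast_one, Nat.cast_zero, add_zero]
  ring

theorem log_Gamma_eq_tsum {x : ℝ} (hx : 0 < x) :
    log (Gamma x) = -log x - eulerMascheroniConstant * x + ∑' k, logGammaTerm k x := by
  have h : Tendsto (BohrMollerup.logGammaSeq x) atTop
      (𝓝 (-log x + ∑' k, logGammaTerm k x - x * eulerMascheroniConstant)) := by
    rw [show BohrMollerup.logGammaSeq x = _ from funext (logGammaSeq_eq hx.le)]
    exact ((summable_logGammaTerm hx.le).hasSum.tendsto_sum_nat.const_add _).sub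
      (tendsto_harmonic_sub_log.const_mul x)
  rw [tendsto_nhds_unique (BohrMollerup.tendsto_log_gamma hx) h]
  ring

theorem digamma_eq_tsum {x : ℝ} (hx : 0 < x) :
    digamma x = -1 / x - eulerMascheroniConstant + ∑' k, digammaTerm k x := by
  have hx_mem : x ∈ Set.Ioo 0 (x + 1) := ⟨hx, by linarith⟩
  -- the bound `digammaTerm k y ≤ y / (k+1)²` is uniform only on bounded intervals
  have htsum : HasDerivAt (fun y => ∑' k, logGammaTerm k y) (∑' k, digammaTerm k x) x :=
    hasDerivAt_tsum_of_isPreconnected (summable_one_div_nat_add_one_sq.mul_left (x + 1))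
      isOpen_Ioo isPreconnected_Ioo
      (fun k y hy => hasDerivAt_logGammaTerm (by linarith [hy.1]))
      (fun k y hy => by
        rw [norm_of_nonneg (digammaTerm_nonneg hy.1.le k)]
        exact (digammaTerm_le hy.1.le k).trans
          (mul_le_mul_of_nonneg_right hy.2.le (by positivity)))
      hx_mem (summable_logGammaTerm hx.le) hx_mem
  have hlog : HasDerivAt (fun y => -log y - eulerMascheroniConstant * y)
      (-1 / x - eulerMascheroniConstant) x := by
    simpa [neg_div] using (hasDerivAt_log hx.ne').fun_neg.fun_sub
      ((hasDerivAt_id x).const_mul eulerMascheroniConstant)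
  have heq : (fun y => log (Gamma y)) =ᶠ[𝓝 x]
      fun y => -log y - eulerMascheroniConstant * y + ∑' k, logGammaTerm k y :=
    (eventually_gt_nhds hx).mono fun y hy => log_Gamma_eq_tsum hy
  rw [digamma, heq.deriv_eq, (hlog.fun_add htsum).deriv]

theorem trigamma_eq_tsum {x : ℝ} (hx : 0 < x) :
    trigamma x = 1 / x ^ 2 + ∑' k : ℕ, 1 / (x + (k + 1)) ^ 2 := by
  have htsum : HasDerivAt (fun y => ∑' k, digammaTerm k y)
      (∑' k : ℕ, 1 / (x + (k + 1)) ^ 2) x :=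
    hasDerivAt_tsum_of_isPreconnected summable_one_div_nat_add_one_sq isOpen_Ioi
      isPreconnected_Ioi (fun k y hy => hasDerivAt_digammaTerm (by linarith [hy.out]))
      (fun k y hy => by
        rw [norm_of_nonneg (by positivity)]
        exact one_div_add_sq_le_one_div_sq (le_of_lt hy) k)
      (Set.mem_Ioi.mpr hx) (summable_digammaTerm hx.le) (Set.mem_Ioi.mpr hx)
  have hrec : HasDerivAt (fun y => -1 / y - eulerMascheroniConstant) (1 / x ^ 2) x := by
    simpa [neg_div] using ((hasDerivAt_inv hx.ne').neg).sub_const eulerMascheroniConstant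
  have heq : digamma =ᶠ[𝓝 x]
      fun y => -1 / y - eulerMascheroniConstant + ∑' k, digammaTerm k y :=
    (eventually_gt_nhds hx).mono fun y hy => digamma_eq_tsum hy
  rw [trigamma, heq.deriv_eq, (hrec.fun_add htsum).deriv]

theorem hasSum_trigamma {x : ℝ} (hx : 0 < x) :
    HasSum (fun n : ℕ => 1 / (x + n) ^ 2) (trigamma x) := by
  have htail := (summable_one_div_nat_add_one_sq.of_nonneg_of_le (fun k => by positivity)
    (one_div_add_sq_le_one_div_sq hx.le)).hasSum
  have h := HasSum.zero_add (f := fun n : ℕ => 1 / (x + n) ^ 2) (by push_cast; exact htail)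
  rwa [Nat.cast_zero, add_zero, ← trigamma_eq_tsum hx] at h

lemma sq_add_mul_le_mul_sq_add {b c n : ℝ} (hc : 1 ≤ c) (hcb : c * b ^ 2 ≤ n ^ 2) :
    (n + c * b) ^ 2 ≤ c * (n + b) ^ 2 := by
  nlinarith [mul_nonneg (sub_nonneg.mpr hc) (sub_nonneg.mpr hcb)]

lemma sq_add_mul_lt_mul_sq_add {b c n : ℝ} (hc : 1 < c) (hcb : c * b ^ 2 < n ^ 2) :
    (n + c * b) ^ 2 < c * (n + b) ^ 2 := by
  nlinarith [mul_pos (sub_pos.mpr hc) (sub_pos.mpr hcb)]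

theorem trigamma_one_add_lt_mul_trigamma {b c : ℝ} (hb : 0 ≤ b) (hc : 1 < c)
    (hcb : c * b ^ 2 ≤ 1) : trigamma (1 + b) < c * trigamma (1 + c * b) := by
  have hterm : ∀ n : ℕ, (1 + c * b + n) ^ 2 ≤ c * (1 + b + n) ^ 2 := fun n => by
    have hn : c * b ^ 2 ≤ (1 + n) ^ 2 := hcb.trans (by nlinarith [n.cast_nonneg (α := ℝ)])
    convert sq_add_mul_le_mul_sq_add hc.le hn using 2 <;> ring
  have hterm_one : (1 + c * b + 1) ^ 2 < c * (1 + b + 1) ^ 2 := by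
    convert sq_add_mul_lt_mul_sq_add (b := b) (n := 2) hc (by linarith) using 2 <;> ring
  refine hasSum_lt (i := 1) (fun n => ?_) ?_ (hasSum_trigamma (by positivity))
    ((hasSum_trigamma (by positivity)).mul_left c)
  · rw [mul_one_div, div_le_div_iff₀ (by positivity) (by positivity)]
    linarith [hterm n]
  · rw [mul_one_div, div_lt_div_iff₀ (by positivity) (by positivity)]
    push_cast
    linarith

theorem stmt2 (p : ℝ) (hp : Real.sqrt 3 ≤ p) :
    0 < 3 * trigamma (1 + 3 / p) - trigamma (1 + 1 / p) := by
  have hp0 : 0 < p := (Real.sqrt_pos.mpr three_pos).trans_le hp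
  have hp2 : 3 ≤ p ^ 2 := by simpa using pow_le_pow_left₀ (Real.sqrt_nonneg 3) hp 2
  have h := trigamma_one_add_lt_mul_trigamma (b := 1 / p) (c := 3) (by positivity) (by norm_num)
    (by rw [div_pow, one_pow, mul_one_div, div_le_one (by positivity)]; exact hp2)
  rw [mul_one_div] at h
  linarith
end

section
/- The function p ↦ d_p := (2^(1/p) Γ(1+1/p))² / (2π) is strictly decreasing on [2,∞), with d_2 = 1/4 and lim_{p→∞} d_p = 1/(2π). -/
open Real Set Filter

/-!
By Bohr–Mollerup, `z ↦ log Γ(z) + z log 2` is convex on `(0, ∞)`; its derivative at `1` is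
`log 2 - γ > 0`, so it increases on `[1, ∞)`. Exponentiating, `x ↦ 2^x Γ(1 + x)` increases on
`[0, ∞)`, and `d_p` is its square at `x = 1/p`, up to the factor `1/(2π)`.
-/

noncomputable def dconst (p : ℝ) : ℝ :=
  ((2 : ℝ) ^ (1 / p) * Real.Gamma (1 + 1 / p)) ^ 2 / (2 * π)

/-- Fixing the right end `y`, the secant slope of a convex function increases with the left end
`x`, so for `a ≤ x` it dominates `f' a > 0`. -/
theorem ConvexOn.strictMonoOn_of_hasDerivAt_pos {S : Set ℝ} {f : ℝ → ℝ} {a f' : ℝ}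
    (hf : ConvexOn ℝ S f) (ha : a ∈ S) (hfa : HasDerivAt f f' a) (hf' : 0 < f') :
    StrictMonoOn f (S ∩ Ici a) := by
  rintro x ⟨hxS, hax⟩ y ⟨hyS, -⟩ hxy
  have hay : a < y := lt_of_le_of_lt hax hxy
  have h_deriv_le : f' ≤ (f a - f y) / (a - y) := by
    simpa [slope_def_field, ← neg_div_neg_eq (f y - f a)] using
      hf.le_slope_of_hasDerivAt ha hyS hay hfa
  have h_secant : (f a - f y) / (a - y) ≤ (f x - f y) / (x - y) :=
    hf.secant_mono hyS ha hxS hay.ne hxy.ne hax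
  have h_pos : 0 < (f y - f x) / (y - x) := by
    rw [← neg_div_neg_eq, neg_sub, neg_sub]
    linarith
  exact sub_pos.1 ((div_pos_iff_of_pos_right (sub_pos.2 hxy)).1 h_pos)

theorem strictMonoOn_log_Gamma_add_mul_log_two :
    StrictMonoOn (fun z ↦ log (Gamma z) + z * log 2) (Ici 1) := by
  have h_convex : ConvexOn ℝ (Ioi 0) (fun z ↦ log (Gamma z) + z * log 2) :=
    convexOn_log_Gamma.add
      ((convexOn_id (convex_Ioi 0)).smul (log_nonneg one_le_two) |>.congr fun z _ ↦ by
        simp [mul_comm])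
  have h_deriv : HasDerivAt (fun z ↦ log (Gamma z) + z * log 2)
      (-eulerMascheroniConstant + log 2) 1 := by
    have h := (Real.hasDerivAt_Gamma_one.log (by simp)).add (hasDerivAt_mul_const (log 2))
    rwa [Gamma_one, div_one] at h
  have h_pos : 0 < -eulerMascheroniConstant + log 2 := by
    linarith [eulerMascheroniConstant_lt_two_thirds, log_two_gt_d9]
  have := h_convex.strictMonoOn_of_hasDerivAt_pos (mem_Ioi.2 one_pos) h_deriv h_pos
  rwa [inter_eq_right.2 (Ici_subset_Ioi.2 one_pos)] at this

theorem strictMonoOn_two_rpow_mul_Gamma_one_add :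
    StrictMonoOn (fun x : ℝ ↦ (2 : ℝ) ^ x * Gamma (1 + x)) (Ici 0) := by
  have h_exp : ∀ x : ℝ, 0 ≤ x →
      exp (log (Gamma (1 + x)) + (1 + x) * log 2) = 2 * ((2 : ℝ) ^ x * Gamma (1 + x)) := by
    intro x hx
    rw [exp_add, exp_log (Gamma_pos_of_pos (by linarith)), mul_comm, mul_comm _ (log 2),
      ← rpow_def_of_pos two_pos, rpow_add two_pos, rpow_one]
    ring
  intro x (hx : 0 ≤ x) y (hy : 0 ≤ y) hxy
  have h_lt := exp_lt_exp.2 <| strictMonoOn_log_Gamma_add_mul_log_two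
    (show 1 ≤ 1 + x by linarith) (show 1 ≤ 1 + y by linarith) (by linarith)
  rw [h_exp x hx, h_exp y hy] at h_lt
  linarith

theorem strictAntiOn_dconst : StrictAntiOn dconst (Ici 2) := by
  intro p (hp : 2 ≤ p) q (hq : 2 ≤ q) hpq
  have h_inv : 1 / q < 1 / p := one_div_lt_one_div_of_lt (by linarith) hpq
  have h_mono := strictMonoOn_two_rpow_mul_Gamma_one_add (show 0 ≤ 1 / q by positivity)
    (show 0 ≤ 1 / p by positivity) h_inv
  have h_Gamma_pos : 0 < Gamma (1 + 1 / q) := Gamma_pos_of_pos (by positivity)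
  unfold dconst
  gcongr

theorem dconst_two : dconst 2 = 1 / 4 := by
  have h_Gamma : Gamma (1 + 1 / 2) = √π / 2 := by
    rw [add_comm, Gamma_add_one (by norm_num), Gamma_one_half_eq]
    ring
  have h_sqrt : ((2 : ℝ) ^ ((1 : ℝ) / 2)) ^ 2 = 2 := by
    rw [← sqrt_eq_rpow, sq_sqrt zero_le_two]
  rw [dconst, h_Gamma, mul_pow, h_sqrt, div_pow, sq_sqrt pi_pos.le]
  field_simp
  ring

theorem tendsto_dconst_atTop : Tendsto dconst atTop (nhds (1 / (2 * π))) := by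
  have h_cont : ContinuousAt (fun x : ℝ ↦ ((2 : ℝ) ^ x * Gamma (1 + x)) ^ 2 / (2 * π)) 0 := by
    have h_Gamma : ContinuousAt (fun x : ℝ ↦ Gamma (1 + x)) 0 :=
      Real.hasDerivAt_Gamma_one.continuousAt.comp_of_eq
        (continuousAt_const.add continuousAt_id) (add_zero 1)
    exact (((continuousAt_const_rpow two_ne_zero).mul h_Gamma).pow 2).div_const _
  have h_inv : Tendsto (fun p : ℝ ↦ 1 / p) atTop (nhds 0) := by
    simpa only [one_div] using tendsto_inv_atTop_zero
  have := h_cont.tendsto.comp h_inv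
  rwa [rpow_zero, add_zero, Gamma_one, one_mul, one_pow] at this

theorem stmt3 :
    StrictAntiOn dconst (Ici 2) ∧ dconst 2 = 1 / 4 ∧
      Tendsto dconst atTop (nhds (1 / (2 * π))) :=
  ⟨strictAntiOn_dconst, dconst_two, tendsto_dconst_atTop⟩
end

section
/- For all p ≥ 3, 2·Ψ(1+5/p) + Ψ(1+1/p) − 3·Ψ(1+3/p) = (2/p)·Σ_{k≥1} (k − 3/p) / ((k+5/p)(k+1/p)(k+3/p)) > 0. -/
open Real Filter Finset Set Topology

lemma digamma_tendsto (x : ℝ) (hx : 0 < x) :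
    Tendsto (fun n : ℕ => Real.log n - ∑ k ∈ Finset.range n, 1 / (x + k + 1)) atTop
      (𝓝 (deriv (fun y => Real.log (Real.Gamma y)) (x + 1))) := by
  set f : ℝ → ℝ := fun y => Real.log (Real.Gamma y) with hfdef
  have hc : ConvexOn ℝ (Ioi 0) f := Real.convexOn_log_Gamma
  have hder : ∀ {y : ℝ}, 0 < y → DifferentiableAt ℝ f y := by
    intro y hy
    refine ((Real.differentiableAt_Gamma ?_).log (Real.Gamma_ne_zero ?_)) <;>
      exact fun m => ne_of_gt (by have := Nat.cast_nonneg (α := ℝ) m; linarith)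
  have h_rec : ∀ y : ℝ, 0 < y → f (y + 1) = f y + Real.log y := fun y hy => by
    simp only [f, Real.Gamma_add_one hy.ne',
      Real.log_mul hy.ne' (Real.Gamma_pos_of_pos hy).ne', add_comm]
  have hder_rec : ∀ y : ℝ, 0 < y → deriv f (y + 1) = deriv f y + 1 / y := by
    intro y hy
    rw [← deriv_comp_add_const, one_div, ← Real.deriv_log,
      ← deriv_add (hder hy) (Real.differentiableAt_log hy.ne')]
    apply Filter.EventuallyEq.deriv_eq
    filter_upwards [eventually_gt_nhds hy] using h_rec
  have hub : ∀ y : ℝ, 0 < y → deriv f y ≤ Real.log y := by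
    intro y hy
    have := hc.deriv_le_slope (mem_Ioi.mpr hy) (mem_Ioi.mpr (by linarith : (0:ℝ) < y + 1))
      (by linarith) (hder hy)
    rwa [slope_def_field, add_sub_cancel_left, div_one, h_rec y hy, add_sub_cancel_left] at this
  have hlb : ∀ y : ℝ, 0 < y → Real.log y ≤ deriv f (y + 1) := by
    intro y hy
    have := hc.slope_le_deriv (mem_Ioi.mpr hy) (mem_Ioi.mpr (by linarith : (0:ℝ) < y + 1))
      (by linarith) (hder (by linarith))
    rwa [slope_def_field, add_sub_cancel_left, div_one, h_rec y hy, add_sub_cancel_left] at this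
  have hsum : ∀ n : ℕ, deriv f (x + 1 + n) = deriv f (x + 1) + ∑ k ∈ Finset.range n, 1 / (x + k + 1) := by
    intro n
    induction n with
    | zero => simp
    | succ n ih =>
      push_cast
      rw [show x + 1 + ((n:ℝ) + 1) = (x + 1 + n) + 1 from by ring, hder_rec _ (by positivity),
        ih, Finset.sum_range_succ]
      push_cast
      ring
  -- the sandwich
  set u : ℕ → ℝ := fun n => Real.log n - ∑ k ∈ Finset.range n, 1 / (x + k + 1) with hu
  have key : ∀ n : ℕ, 1 ≤ n → 0 ≤ deriv f (x + 1) - u n ∧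
      deriv f (x + 1) - u n ≤ Real.log (x + n + 1) - Real.log n := by
    intro n hn
    have hn' : (0:ℝ) < n := by exact_mod_cast hn
    have e1 : deriv f (x + 1) = deriv f (x + 1 + n) - ∑ k ∈ Finset.range n, 1 / (x + k + 1) := by
      rw [hsum n]; ring
    have hl : Real.log (x + n) ≤ deriv f (x + 1 + n) := by
      have := hlb (x + n) (by positivity)
      have e : (x + n) + 1 = x + 1 + n := by ring
      rwa [e] at this
    have hu' : deriv f (x + 1 + n) ≤ Real.log (x + n + 1) := by
      calc deriv f (x + 1 + n) ≤ Real.log (x + 1 + n) := hub _ (by positivity)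
        _ = Real.log (x + n + 1) := by norm_num; ring_nf
    constructor
    · have : Real.log n ≤ Real.log (x + n) := Real.log_le_log hn' (by linarith)
      simp only [u, e1]; linarith
    · simp only [u, e1]; linarith
  have hlim0 : Tendsto (fun n : ℕ => Real.log (x + n + 1) - Real.log n) atTop (𝓝 0) := by
    have h1 : Tendsto (fun n : ℕ => (x + 1) / n + 1) atTop (𝓝 1) := by
      simpa using (tendsto_const_div_atTop_nhds_zero_nat (x + 1)).add tendsto_const_nhds
    have h2 : Tendsto (fun n : ℕ => Real.log ((x + 1) / n + 1)) atTop (𝓝 0) := by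
      rw [← Real.log_one]
      exact (Real.continuousAt_log one_ne_zero).tendsto.comp h1
    apply h2.congr'
    filter_upwards [eventually_ge_atTop 1] with n hn
    have hn' : (0:ℝ) < n := by exact_mod_cast hn
    rw [← Real.log_div (by positivity) hn'.ne']
    congr 1
    field_simp
    ring
  have hdiff : Tendsto (fun n : ℕ => deriv f (x + 1) - u n) atTop (𝓝 0) := by
    apply squeeze_zero' ?_ ?_ hlim0
    · filter_upwards [eventually_ge_atTop 1] with n hn using (key n hn).1
    · filter_upwards [eventually_ge_atTop 1] with n hn using (key n hn).2
  have h3 : Tendsto (fun _ : ℕ => deriv f (x + 1)) atTop (𝓝 (deriv f (x + 1))) :=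
    tendsto_const_nhds
  simpa using h3.sub hdiff



open Real

theorem stmt5 (p : ℝ) (hp : 3 ≤ p) :
    2 * digamma (1 + 5 / p) + digamma (1 + 1 / p) - 3 * digamma (1 + 3 / p)
        = (2 / p) * ∑' k : ℕ,
            (((k : ℝ) + 1) - 3 / p) /
              ((((k : ℝ) + 1) + 5 / p) * (((k : ℝ) + 1) + 1 / p) * (((k : ℝ) + 1) + 3 / p)) ∧
      0 < 2 * digamma (1 + 5 / p) + digamma (1 + 1 / p) - 3 * digamma (1 + 3 / p) := by
  have hp0 : (0:ℝ) < p := by linarith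
  have h3p : 3 / p ≤ 1 := by rw [div_le_one hp0]; linarith
  set h : ℕ → ℝ := fun k =>
    (((k : ℝ) + 1) - 3 / p) /
      ((((k : ℝ) + 1) + 5 / p) * (((k : ℝ) + 1) + 1 / p) * (((k : ℝ) + 1) + 3 / p)) with hh
  have hdenpos : ∀ k : ℕ, 0 < (((k : ℝ) + 1) + 5 / p) * (((k : ℝ) + 1) + 1 / p) *
      (((k : ℝ) + 1) + 3 / p) := by
    intro k
    have : (0:ℝ) ≤ (k : ℝ) := Nat.cast_nonneg k
    positivity
  have hnonneg : ∀ k : ℕ, 0 ≤ h k := by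
    intro k
    apply div_nonneg _ (hdenpos k).le
    have : (1:ℝ) ≤ (k:ℝ) + 1 := by have := Nat.cast_nonneg (α := ℝ) k; linarith
    linarith
  have hb : ∀ k : ℕ, h k ≤ 1 / ((k:ℝ) + 1) ^ 2 := by
    intro k
    have hk1 : (0:ℝ) < (k:ℝ) + 1 := by positivity
    have h5 : (0:ℝ) < 5 / p := by positivity
    have h1 : (0:ℝ) < 1 / p := by positivity
    have h3 : (0:ℝ) < 3 / p := by positivity
    have key : h k ≤ ((k:ℝ) + 1) / (((k:ℝ) + 1) * ((k:ℝ) + 1) * ((k:ℝ) + 1)) := by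
      apply div_le_div₀ hk1.le (by have : (0:ℝ) < 3/p := h3; linarith) (by positivity)
      have e1 : (k:ℝ) + 1 ≤ (k:ℝ) + 1 + 5 / p := by linarith
      have e2 : (k:ℝ) + 1 ≤ (k:ℝ) + 1 + 1 / p := by linarith
      have e3 : (k:ℝ) + 1 ≤ (k:ℝ) + 1 + 3 / p := by linarith
      exact mul_le_mul (mul_le_mul e1 e2 hk1.le (by linarith)) e3 hk1.le (by positivity)
    calc h k ≤ ((k:ℝ) + 1) / (((k:ℝ) + 1) * ((k:ℝ) + 1) * ((k:ℝ) + 1)) := key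
      _ = 1 / ((k:ℝ) + 1) ^ 2 := by field_simp
  have hsq : Summable (fun k : ℕ => 1 / ((k:ℝ) + 1) ^ 2) := by
    have h0 : Summable (fun n : ℕ => 1 / (n:ℝ) ^ 2) :=
      Real.summable_one_div_nat_pow.mpr one_lt_two
    have := (summable_nat_add_iff 1).mpr h0
    apply this.congr
    intro n
    push_cast
    ring
  have hsummable : Summable h := Summable.of_nonneg_of_le hnonneg hb hsq
  have htpos : 0 < ∑' k, h k := by
    refine Summable.tsum_pos hsummable hnonneg 1 ?_
    apply div_pos _ (hdenpos 1)
    norm_num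
    linarith
  -- g is the summand of the combined series
  set g : ℕ → ℝ := fun k =>
    3 * (1 / (3 / p + (k:ℝ) + 1)) - 2 * (1 / (5 / p + (k:ℝ) + 1)) - 1 / (1 / p + (k:ℝ) + 1)
    with hg
  have hgh : ∀ k : ℕ, g k = 2 / p * h k := by
    intro k
    have hk0 : (0:ℝ) ≤ (k:ℝ) := Nat.cast_nonneg k
    have d1 : (3 / p + (k:ℝ) + 1) ≠ 0 := by positivity
    have d2 : (5 / p + (k:ℝ) + 1) ≠ 0 := by positivity
    have d3 : (1 / p + (k:ℝ) + 1) ≠ 0 := by positivity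
    have d4 : (((k : ℝ) + 1) + 5 / p) ≠ 0 := by positivity
    have d5 : (((k : ℝ) + 1) + 1 / p) ≠ 0 := by positivity
    have d6 : (((k : ℝ) + 1) + 3 / p) ≠ 0 := by positivity
    simp only [hg, hh]
    field_simp
    ring
  have hgsum : HasSum g (2 / p * ∑' k, h k) := by
    have := hsummable.hasSum.mul_left (2 / p)
    rwa [show (fun k => 2 / p * h k) = g from funext fun k => (hgh k).symm] at this
  have hgt : Tendsto (fun n : ℕ => ∑ i ∈ Finset.range n, g i) atTop
      (𝓝 (2 / p * ∑' k, h k)) := hgsum.tendsto_sum_nat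
  -- the digamma limits
  have hA : Tendsto (fun n : ℕ => Real.log n - ∑ k ∈ Finset.range n, 1 / (5 / p + k + 1)) atTop
      (𝓝 (digamma (1 + 5 / p))) := by
    have := digamma_tendsto (5 / p) (by positivity)
    rw [show (5 / p + 1 : ℝ) = 1 + 5 / p from by ring] at this
    exact this
  have hB : Tendsto (fun n : ℕ => Real.log n - ∑ k ∈ Finset.range n, 1 / (1 / p + k + 1)) atTop
      (𝓝 (digamma (1 + 1 / p))) := by
    have := digamma_tendsto (1 / p) (by positivity)
    rw [show (1 / p + 1 : ℝ) = 1 + 1 / p from by ring] at this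
    exact this
  have hC : Tendsto (fun n : ℕ => Real.log n - ∑ k ∈ Finset.range n, 1 / (3 / p + k + 1)) atTop
      (𝓝 (digamma (1 + 3 / p))) := by
    have := digamma_tendsto (3 / p) (by positivity)
    rw [show (3 / p + 1 : ℝ) = 1 + 3 / p from by ring] at this
    exact this
  have hcombo : Tendsto (fun n : ℕ =>
      2 * (Real.log n - ∑ k ∈ Finset.range n, 1 / (5 / p + k + 1))
      + (Real.log n - ∑ k ∈ Finset.range n, 1 / (1 / p + k + 1))
      - 3 * (Real.log n - ∑ k ∈ Finset.range n, 1 / (3 / p + k + 1))) atTop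
      (𝓝 (2 * digamma (1 + 5 / p) + digamma (1 + 1 / p) - 3 * digamma (1 + 3 / p))) :=
    ((hA.const_mul 2).add hB).sub (hC.const_mul 3)
  have heq : ∀ n : ℕ,
      2 * (Real.log n - ∑ k ∈ Finset.range n, 1 / (5 / p + k + 1))
      + (Real.log n - ∑ k ∈ Finset.range n, 1 / (1 / p + k + 1))
      - 3 * (Real.log n - ∑ k ∈ Finset.range n, 1 / (3 / p + k + 1))
      = ∑ i ∈ Finset.range n, g i := by
    intro n
    simp only [hg, Finset.sum_sub_distrib, ← Finset.mul_sum]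
    ring
  have hcombo' : Tendsto (fun n : ℕ => ∑ i ∈ Finset.range n, g i) atTop
      (𝓝 (2 * digamma (1 + 5 / p) + digamma (1 + 1 / p) - 3 * digamma (1 + 3 / p))) :=
    hcombo.congr heq
  have hmain : 2 * digamma (1 + 5 / p) + digamma (1 + 1 / p) - 3 * digamma (1 + 3 / p)
      = 2 / p * ∑' k, h k := tendsto_nhds_unique hcombo' hgt
  refine ⟨hmain, ?_⟩
  rw [hmain]
  positivity
end

section
/- For every p ≥ 2 and every n ∈ ℕ, (2n+5)·Γ(1+(2n+3)/p)² ≥ (2n+3)·Γ(1+(2n+5)/p)·Γ(1+(2n+1)/p), with equality when p = 2. -/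
open Real

lemma gamma_key {a h : ℝ} (ha : 0 < a) (hh0 : 0 ≤ h) (hh1 : h ≤ 1) :
    Real.Gamma (a + h) * Real.Gamma (a + 1 - h) ≤ Real.Gamma a * Real.Gamma (a + 1) := by
  have hF := Real.convexOn_log_Gamma
  have haI : a ∈ Set.Ioi (0:ℝ) := ha
  have ha1I : a + 1 ∈ Set.Ioi (0:ℝ) := by simp; linarith
  have h1 : Real.log (Real.Gamma (a + h)) ≤
      (1 - h) * Real.log (Real.Gamma a) + h * Real.log (Real.Gamma (a + 1)) := by
    have := hF.2 haI ha1I (by linarith : (0:ℝ) ≤ 1 - h) hh0 (by ring)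
    simp only [smul_eq_mul, Function.comp_apply] at this
    rw [show (1 - h) * a + h * (a + 1) = a + h from by ring] at this
    exact this
  have h2 : Real.log (Real.Gamma (a + 1 - h)) ≤
      h * Real.log (Real.Gamma a) + (1 - h) * Real.log (Real.Gamma (a + 1)) := by
    have := hF.2 haI ha1I hh0 (by linarith : (0:ℝ) ≤ 1 - h) (by ring)
    simp only [smul_eq_mul, Function.comp_apply] at this
    rw [show h * a + (1 - h) * (a + 1) = a + 1 - h from by ring] at this
    exact this
  have p1 : 0 < Real.Gamma (a + h) := Real.Gamma_pos_of_pos (by linarith)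
  have p2 : 0 < Real.Gamma (a + 1 - h) := Real.Gamma_pos_of_pos (by linarith)
  have p3 : 0 < Real.Gamma a := Real.Gamma_pos_of_pos ha
  have p4 : 0 < Real.Gamma (a + 1) := Real.Gamma_pos_of_pos (by linarith)
  have hlog : Real.log (Real.Gamma (a + h) * Real.Gamma (a + 1 - h)) ≤
      Real.log (Real.Gamma a * Real.Gamma (a + 1)) := by
    rw [Real.log_mul (ne_of_gt p1) (ne_of_gt p2), Real.log_mul (ne_of_gt p3) (ne_of_gt p4)]
    linarith
  exact (Real.log_le_log_iff (by positivity) (by positivity)).mp hlog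

theorem stmt7 (n : ℕ) :
    (∀ p : ℝ, 2 ≤ p →
        (2 * (n : ℝ) + 3) * Real.Gamma (1 + (2 * (n : ℝ) + 5) / p)
            * Real.Gamma (1 + (2 * (n : ℝ) + 1) / p)
          ≤ (2 * (n : ℝ) + 5) * Real.Gamma (1 + (2 * (n : ℝ) + 3) / p) ^ 2) ∧
      (2 * (n : ℝ) + 5) * Real.Gamma (1 + (2 * (n : ℝ) + 3) / 2) ^ 2
        = (2 * (n : ℝ) + 3) * Real.Gamma (1 + (2 * (n : ℝ) + 5) / 2)
            * Real.Gamma (1 + (2 * (n : ℝ) + 1) / 2) := by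
  constructor
  · intro p hp
    have hp0 : (0:ℝ) < p := by linarith
    set a : ℝ := (2 * n + 3) / p with ha_def
    set h : ℝ := 2 / p with hh_def
    have ha : 0 < a := by positivity
    have hh0 : 0 < h := by positivity
    have hh1 : h ≤ 1 := by rw [hh_def, div_le_one hp0]; linarith
    have key := gamma_key ha hh0.le hh1
    -- rewrite arguments
    have e1 : 1 + (2 * (n : ℝ) + 5) / p = (a + h) + 1 := by
      rw [ha_def, hh_def]; field_simp; ring
    have e2 : 1 + (2 * (n : ℝ) + 1) / p = a + 1 - h := by
      rw [ha_def, hh_def]; field_simp; ring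
    have e3 : 1 + (2 * (n : ℝ) + 3) / p = a + 1 := by
      rw [ha_def]; field_simp; ring
    rw [e1, e2, e3]
    have g1 : Real.Gamma ((a + h) + 1) = (a + h) * Real.Gamma (a + h) :=
      Real.Gamma_add_one (by positivity)
    have g2 : Real.Gamma (a + 1) = a * Real.Gamma a := by
      have := Real.Gamma_add_one (ne_of_gt ha)
      simpa [add_comm] using this
    have hco : (2 * (n : ℝ) + 3) * (a + h) = (2 * (n : ℝ) + 5) * a := by
      rw [ha_def, hh_def]; field_simp; ring
    have p3 : 0 < Real.Gamma a := Real.Gamma_pos_of_pos ha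
    have p2 : 0 < Real.Gamma (a + 1 - h) := Real.Gamma_pos_of_pos (by linarith)
    rw [g1]
    calc (2 * (n : ℝ) + 3) * ((a + h) * Real.Gamma (a + h)) * Real.Gamma (a + 1 - h)
        = ((2 * (n : ℝ) + 3) * (a + h)) * (Real.Gamma (a + h) * Real.Gamma (a + 1 - h)) := by
          ring
      _ ≤ ((2 * (n : ℝ) + 3) * (a + h)) * (Real.Gamma a * Real.Gamma (a + 1)) := by
          apply mul_le_mul_of_nonneg_left key
          have : (0:ℝ) < 2 * (n : ℝ) + 3 := by positivity
          nlinarith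
      _ = (2 * (n : ℝ) + 5) * Real.Gamma (a + 1) ^ 2 := by
          rw [hco, g2]; ring
  · -- equality at p = 2
    set c : ℝ := 1 + (2 * (n : ℝ) + 1) / 2 with hc_def
    have hc : 0 < c := by positivity
    have e1 : 1 + (2 * (n : ℝ) + 3) / 2 = c + 1 := by rw [hc_def]; ring
    have e2 : 1 + (2 * (n : ℝ) + 5) / 2 = (c + 1) + 1 := by rw [hc_def]; ring
    rw [e1, e2]
    have g1 : Real.Gamma (c + 1) = c * Real.Gamma c := by
      have := Real.Gamma_add_one (ne_of_gt hc)
      simpa [add_comm] using this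
    have g2 : Real.Gamma ((c + 1) + 1) = (c + 1) * Real.Gamma (c + 1) := by
      have := Real.Gamma_add_one (by positivity : c + 1 ≠ 0)
      simpa [add_comm] using this
    rw [g2, g1]
    have hc2 : c = (2 * (n : ℝ) + 3) / 2 := by rw [hc_def]; ring
    rw [hc2]; ring
end

section
/- For every p ≥ 2 and every s > 0, |sin(s)/s − ∫₀^∞ cos(s·r)·exp(−r^p) dr| ≤ 1.016/p. -/
/-!
The cosine is bounded by one, so the difference is at most `∫₀^∞ G(r^p) dr` where
`G u = |1_{u ≤ 1} - e^{-u}|` (`expGap`). Substituting `u = r^p` and using weighted AM-GM,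
`u^(θ-1) ≤ (1-θ)/u + θ` with `θ = 1/p`, bounds this by `θ` times a convex combination of
`∫₀^∞ G u / u du` and `∫₀^∞ G u du ≤ 1/2 + 1/e`. The first is `Ein 1 + E₁ 1 ≈ 1.015984`, the
source of the constant, so it is needed to five digits: `Ein 1 = ∫₀¹ (1 - e^{-u}) / u du` from the
Taylor expansion of `e^{-u}`, and `E₁ 1 = ∫₁^∞ e^{-u} / u du ≤ e^{-1} W 1` for any `W` with
`W - W' ≥ 1/u` and `e^{-u} W u → 0`, because `-e^{-u} W u` is then an antiderivative dominating
the integrand.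
-/

open Real MeasureTheory Set Filter Topology

lemma integrableOn_Ioi_zero_of_le_one_of_le_exp_neg {f : ℝ → ℝ} (hf : Measurable f)
    (h₁ : ∀ u ∈ Ioc (0 : ℝ) 1, |f u| ≤ 1) (h₂ : ∀ u ∈ Ioi (1 : ℝ), |f u| ≤ exp (-u)) :
    IntegrableOn f (Ioi 0) := by
  rw [← Ioc_union_Ioi_eq_Ioi zero_le_one, integrableOn_union]
  refine ⟨(integrableOn_const measure_Ioc_lt_top.ne (C := (1 : ℝ))).mono'
    hf.aestronglyMeasurable ?_, (integrableOn_exp_neg_Ioi 1).mono' hf.aestronglyMeasurable ?_⟩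
  · exact (ae_restrict_iff' measurableSet_Ioc).2 (Eventually.of_forall h₁)
  · exact (ae_restrict_iff' measurableSet_Ioi).2 (Eventually.of_forall h₂)

section ChangeOfVariables

lemma integral_comp_rpow_Ioi_eq (F : ℝ → ℝ) {p : ℝ} (hp : 0 < p) :
    ∫ r in Ioi (0 : ℝ), F (r ^ p) = p⁻¹ * ∫ u in Ioi (0 : ℝ), u ^ (p⁻¹ - 1) * F u := by
  rw [← integral_comp_rpow_Ioi (fun r => F (r ^ p)) (inv_ne_zero hp.ne'),
    ← integral_const_mul]
  refine setIntegral_congr_fun measurableSet_Ioi fun u hu => ?_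
  rw [smul_eq_mul, rpow_inv_rpow (le_of_lt hu) hp.ne', abs_of_pos (inv_pos.2 hp), mul_assoc]

lemma rpow_sub_one_le {θ u : ℝ} (hθ₀ : 0 ≤ θ) (hθ₁ : θ ≤ 1) (hu : 0 < u) :
    u ^ (θ - 1) ≤ (1 - θ) * u⁻¹ + θ := by
  have h := geom_mean_le_arith_mean2_weighted (sub_nonneg.2 hθ₁) hθ₀ (inv_nonneg.2 hu.le)
    zero_le_one (sub_add_cancel 1 θ)
  rwa [one_rpow, mul_one, mul_one, inv_rpow hu.le, ← rpow_neg hu.le, neg_sub] at h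

lemma integral_comp_rpow_Ioi_le {F : ℝ → ℝ} {p : ℝ} (hp : 1 ≤ p)
    (hF₀ : ∀ u ∈ Ioi (0 : ℝ), 0 ≤ F u) (hF : IntegrableOn F (Ioi 0))
    (hF' : IntegrableOn (fun u => F u / u) (Ioi 0)) :
    ∫ r in Ioi (0 : ℝ), F (r ^ p) ≤
      p⁻¹ * ((1 - p⁻¹) * (∫ u in Ioi (0 : ℝ), F u / u) + p⁻¹ * ∫ u in Ioi (0 : ℝ), F u) := by
  have hp₀ : 0 < p := zero_lt_one.trans_le hp
  have hθ₁ : p⁻¹ ≤ 1 := inv_le_one_of_one_le₀ hp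
  have hsplit : ∫ u in Ioi (0 : ℝ), ((1 - p⁻¹) * (F u / u) + p⁻¹ * F u) =
      (1 - p⁻¹) * (∫ u in Ioi (0 : ℝ), F u / u) + p⁻¹ * ∫ u in Ioi (0 : ℝ), F u := by
    rw [integral_add (hF'.const_mul _) (hF.const_mul _), integral_const_mul, integral_const_mul]
  rw [integral_comp_rpow_Ioi_eq F hp₀, ← hsplit]
  refine mul_le_mul_of_nonneg_left ?_ (inv_nonneg.2 hp₀.le)
  refine setIntegral_mono_of_nonneg (fun u hu => ?_) (fun u hu => ?_)
    ((hF'.const_mul _).add (hF.const_mul _))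
  · exact mul_nonneg (rpow_nonneg (le_of_lt hu) _) (hF₀ u hu)
  · calc u ^ (p⁻¹ - 1) * F u ≤ ((1 - p⁻¹) * u⁻¹ + p⁻¹) * F u :=
          mul_le_mul_of_nonneg_right (rpow_sub_one_le (inv_nonneg.2 hp₀.le) hθ₁ hu) (hF₀ u hu)
      _ = (1 - p⁻¹) * (F u / u) + p⁻¹ * F u := by ring

end ChangeOfVariables

section ExponentialIntegral

lemma setIntegral_Ioi_exp_neg_mul_le_of_le_sub_deriv {a : ℝ} {f W : ℝ → ℝ}
    (hW : ∀ u ∈ Ici a, DifferentiableAt ℝ W u) (hf : ∀ u ∈ Ioi a, 0 ≤ f u)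
    (hfW : ∀ u ∈ Ioi a, f u ≤ W u - deriv W u)
    (hlim : Tendsto (fun u => exp (-u) * W u) atTop (𝓝 0)) :
    ∫ u in Ioi a, exp (-u) * f u ≤ exp (-a) * W a := by
  have hF : ∀ u ∈ Ici a,
      HasDerivAt (fun v => -(exp (-v) * W v)) (exp (-u) * (W u - deriv W u)) u := fun u hu =>
    ((hasDerivAt_neg' u).exp.mul (hW u hu).hasDerivAt).neg.congr_deriv (by ring)
  have hF₀ : ∀ u ∈ Ioi a, 0 ≤ exp (-u) * (W u - deriv W u) := fun u hu =>
    mul_nonneg (exp_pos _).le ((hf u hu).trans (hfW u hu))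
  have hFlim : Tendsto (fun v => -(exp (-v) * W v)) atTop (𝓝 0) := by simpa using hlim.neg
  calc ∫ u in Ioi a, exp (-u) * f u ≤ ∫ u in Ioi a, exp (-u) * (W u - deriv W u) :=
        setIntegral_mono_of_nonneg (fun u hu => mul_nonneg (exp_pos _).le (hf u hu))
          (fun u hu => mul_le_mul_of_nonneg_left (hfW u hu) (exp_pos _).le)
          (integrableOn_Ioi_deriv_of_nonneg' hF hF₀ hFlim)
    _ = exp (-a) * W a := by
        rw [integral_Ioi_of_hasDerivAt_of_nonneg' hF hF₀ hFlim]
        ring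

/- `e1PadeNum / e1PadeDen` is the convergent with denominator of degree 11 of the continued fraction
`e^u E₁(u) = 1/(u + 1/(1 + 1/(u + 2/(1 + 2/(u + ⋯)))))`; for it `W - W' - 1/u` collapses to
`11! · 10! / e1PadeDen²`. -/
noncomputable def e1PadeNum (u : ℝ) : ℝ :=
  3628800 + 80627040 * u + 184386240 * u ^ 2 + 150023520 * u ^ 3 + 58603440 * u ^ 4 +
    12518100 * u ^ 5 + 1553664 * u ^ 6 + 114064 * u ^ 7 + 4842 * u ^ 8 + 109 * u ^ 9 + u ^ 10

noncomputable def e1PadeDen (u : ℝ) : ℝ :=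
  39916800 * u + 199584000 * u ^ 2 + 299376000 * u ^ 3 + 199584000 * u ^ 4 + 69854400 * u ^ 5 +
    13970880 * u ^ 6 + 1663200 * u ^ 7 + 118800 * u ^ 8 + 4950 * u ^ 9 + 110 * u ^ 10 + u ^ 11

open Polynomial in
lemma hasDerivAt_e1PadeNum (u : ℝ) : HasDerivAt e1PadeNum
    (80627040 + 368772480 * u + 450070560 * u ^ 2 + 234413760 * u ^ 3 + 62590500 * u ^ 4 +
      9321984 * u ^ 5 + 798448 * u ^ 6 + 38736 * u ^ 7 + 981 * u ^ 8 + 10 * u ^ 9) u := by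
  have h := Polynomial.hasDerivAt (C 3628800 + C 80627040 * X + C 184386240 * X ^ 2 +
    C 150023520 * X ^ 3 + C 58603440 * X ^ 4 + C 12518100 * X ^ 5 + C 1553664 * X ^ 6 +
    C 114064 * X ^ 7 + C 4842 * X ^ 8 + C 109 * X ^ 9 + X ^ 10 : ℝ[X]) u
  simp only [eval_add, eval_mul, eval_C, eval_X, eval_pow, derivative_add, derivative_mul,
    derivative_C, derivative_X, derivative_X_pow, eval_one, zero_mul, zero_add] at h
  refine h.congr_deriv ?_
  norm_num
  ring

open Polynomial in
lemma hasDerivAt_e1PadeDen (u : ℝ) : HasDerivAt e1PadeDen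
    (39916800 + 399168000 * u + 898128000 * u ^ 2 + 798336000 * u ^ 3 + 349272000 * u ^ 4 +
      83825280 * u ^ 5 + 11642400 * u ^ 6 + 950400 * u ^ 7 + 44550 * u ^ 8 + 1100 * u ^ 9 +
      11 * u ^ 10) u := by
  have h := Polynomial.hasDerivAt (C 39916800 * X + C 199584000 * X ^ 2 + C 299376000 * X ^ 3 +
    C 199584000 * X ^ 4 + C 69854400 * X ^ 5 + C 13970880 * X ^ 6 + C 1663200 * X ^ 7 +
    C 118800 * X ^ 8 + C 4950 * X ^ 9 + C 110 * X ^ 10 + X ^ 11 : ℝ[X]) u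
  simp only [eval_add, eval_mul, eval_C, eval_X, eval_pow, derivative_add, derivative_mul,
    derivative_C, derivative_X, derivative_X_pow, eval_one, zero_mul, zero_add] at h
  refine h.congr_deriv ?_
  norm_num
  ring

lemma e1PadeDen_pos {u : ℝ} (hu : 0 < u) : 0 < e1PadeDen u := by
  unfold e1PadeDen
  positivity

noncomputable def e1Pade (u : ℝ) : ℝ := e1PadeNum u / e1PadeDen u

lemma e1Pade_nonneg {u : ℝ} (hu : 0 < u) : 0 ≤ e1Pade u :=
  div_nonneg (by unfold e1PadeNum; positivity) (e1PadeDen_pos hu).le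

lemma e1Pade_le_one {u : ℝ} (hu : 1 ≤ u) : e1Pade u ≤ 1 := by
  have hP : 0 ≤ e1PadeNum u := by unfold e1PadeNum; positivity
  have h : 0 ≤ e1PadeDen u - u * e1PadeNum u := by
    have : e1PadeDen u - u * e1PadeNum u = 36288000 * u + 118956960 * u ^ 2 +
        114989760 * u ^ 3 + 49560480 * u ^ 4 + 11250960 * u ^ 5 + 1452780 * u ^ 6 +
        109536 * u ^ 7 + 4736 * u ^ 8 + 108 * u ^ 9 + u ^ 10 := by
      unfold e1PadeNum e1PadeDen
      ring
    rw [this]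
    positivity
  rw [e1Pade, div_le_one (e1PadeDen_pos (zero_lt_one.trans_le hu))]
  nlinarith [mul_le_mul_of_nonneg_right hu hP]

lemma tendsto_exp_neg_mul_e1Pade : Tendsto (fun u => exp (-u) * e1Pade u) atTop (𝓝 0) := by
  refine tendsto_of_tendsto_of_tendsto_of_le_of_le' tendsto_const_nhds
    tendsto_exp_neg_atTop_nhds_zero ?_ ?_ <;>
    filter_upwards [eventually_ge_atTop 1] with u hu
  · exact mul_nonneg (exp_pos _).le (e1Pade_nonneg (zero_lt_one.trans_le hu))
  · exact mul_le_of_le_one_right (exp_pos _).le (e1Pade_le_one hu)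

lemma differentiableAt_e1Pade {u : ℝ} (hu : 0 < u) : DifferentiableAt ℝ e1Pade u :=
  ((hasDerivAt_e1PadeNum u).fun_div (hasDerivAt_e1PadeDen u)
    (e1PadeDen_pos hu).ne').differentiableAt

lemma e1Pade_sub_deriv {u : ℝ} (hu : 0 < u) :
    e1Pade u - deriv e1Pade u = u⁻¹ + 144850083840000 / e1PadeDen u ^ 2 := by
  have hQ := e1PadeDen_pos hu
  have h : HasDerivAt e1Pade _ u :=
    (hasDerivAt_e1PadeNum u).fun_div (hasDerivAt_e1PadeDen u) hQ.ne'
  rw [h.deriv, e1Pade]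
  unfold e1PadeNum e1PadeDen at *
  field_simp
  ring

lemma integral_exp_neg_div_Ioi_one_le : ∫ u in Ioi (1 : ℝ), exp (-u) / u ≤ 0.2193956 := by
  have h := setIntegral_Ioi_exp_neg_mul_le_of_le_sub_deriv (f := fun u => u⁻¹)
    (fun u hu => differentiableAt_e1Pade (zero_lt_one.trans_le hu))
    (fun u hu => inv_nonneg.2 (zero_lt_one.trans hu).le)
    (fun u hu => by
      rw [e1Pade_sub_deriv (zero_lt_one.trans hu)]
      exact le_add_of_nonneg_right (by positivity)) tendsto_exp_neg_mul_e1Pade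
  simp only [← div_eq_mul_inv] at h
  refine h.trans ?_
  norm_num [e1Pade, e1PadeNum, e1PadeDen]
  linarith [exp_neg_one_lt_d9]

lemma one_sub_exp_neg_div_le {u : ℝ} (hu₀ : 0 < u) (hu₁ : u ≤ 1) :
    (1 - exp (-u)) / u ≤ 1 - u / 2 + u ^ 2 / 6 - u ^ 3 / 24 + u ^ 4 / 120 - u ^ 5 / 720 +
      u ^ 6 / 5040 - u ^ 7 / 40320 + u ^ 8 / 362880 + 11 / 36288000 * u ^ 9 := by
  have h := (abs_le.1 (exp_bound (x := -u) (by rwa [abs_neg, abs_of_pos hu₀]) (n := 10)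
    (by norm_num))).1
  simp only [Finset.sum_range_succ, Finset.sum_range_zero, abs_neg, abs_of_pos hu₀] at h
  rw [div_le_iff₀ hu₀]
  norm_num [Nat.factorial] at h
  linarith

lemma integral_one_sub_exp_neg_div_le : ∫ u in (0 : ℝ)..1, (1 - exp (-u)) / u ≤ 0.7965997 :=
  calc ∫ u in (0 : ℝ)..1, (1 - exp (-u)) / u
      ≤ ∫ u in (0 : ℝ)..1, (1 - u / 2 + u ^ 2 / 6 - u ^ 3 / 24 + u ^ 4 / 120 - u ^ 5 / 720 +
          u ^ 6 / 5040 - u ^ 7 / 40320 + u ^ 8 / 362880 + 11 / 36288000 * u ^ 9) := by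
        simp only [intervalIntegral.integral_of_le zero_le_one]
        refine setIntegral_mono_of_nonneg (fun u hu => ?_)
          (fun u hu => one_sub_exp_neg_div_le hu.1 hu.2) (Continuous.integrableOn_Ioc (by fun_prop))
        exact div_nonneg (sub_nonneg.2 (exp_le_one_iff.2 (neg_nonpos.2 hu.1.le))) hu.1.le
    _ ≤ 0.7965997 := by
        simp (disch := apply Continuous.intervalIntegrable; fun_prop) only
          [intervalIntegral.integral_add, intervalIntegral.integral_sub,
          intervalIntegral.integral_div, intervalIntegral.integral_const_mul, integral_pow,
          integral_id, intervalIntegral.integral_const]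
        norm_num

end ExponentialIntegral

section ExpGap

noncomputable def expGap (u : ℝ) : ℝ := |(Iic (1 : ℝ)).indicator 1 u - exp (-u)|

lemma expGap_of_le {u : ℝ} (h₀ : 0 ≤ u) (h₁ : u ≤ 1) : expGap u = 1 - exp (-u) := by
  rw [expGap, indicator_of_mem (mem_Iic.2 h₁), Pi.one_apply,
    abs_of_nonneg (sub_nonneg.2 (exp_le_one_iff.2 (neg_nonpos.2 h₀)))]

lemma expGap_of_lt {u : ℝ} (h : 1 < u) : expGap u = exp (-u) := by
  rw [expGap, indicator_of_notMem (notMem_Iic.2 h), zero_sub, abs_neg, abs_of_pos (exp_pos _)]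

lemma expGap_nonneg (u : ℝ) : 0 ≤ expGap u := abs_nonneg _

lemma expGap_le_self {u : ℝ} (h₀ : 0 ≤ u) (h₁ : u ≤ 1) : expGap u ≤ u := by
  rw [expGap_of_le h₀ h₁]
  linarith [add_one_le_exp (-u)]

lemma measurable_expGap : Measurable expGap := by
  unfold expGap
  fun_prop (disch := measurability)

lemma integrableOn_expGap : IntegrableOn expGap (Ioi 0) :=
  integrableOn_Ioi_zero_of_le_one_of_le_exp_neg measurable_expGap
    (fun u hu => by
      rw [abs_of_nonneg (expGap_nonneg u)]
      exact (expGap_le_self hu.1.le hu.2).trans hu.2)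
    (fun u hu => by rw [expGap_of_lt hu, abs_of_pos (exp_pos _)])

lemma integrableOn_expGap_div : IntegrableOn (fun u => expGap u / u) (Ioi 0) :=
  integrableOn_Ioi_zero_of_le_one_of_le_exp_neg (measurable_expGap.div measurable_id)
    (fun u hu => by
      rw [abs_of_nonneg (div_nonneg (expGap_nonneg u) hu.1.le), div_le_one hu.1]
      exact expGap_le_self hu.1.le hu.2)
    (fun u hu => by
      rw [expGap_of_lt hu, abs_of_pos (div_pos (exp_pos _) (zero_lt_one.trans hu))]
      exact div_le_self (exp_pos _).le hu.le)

lemma integral_expGap_le : ∫ u in Ioi (0 : ℝ), expGap u ≤ 1.016 := by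
  rw [← intervalIntegral.integral_interval_add_Ioi integrableOn_expGap
    (integrableOn_expGap.mono_set (Ioi_subset_Ioi zero_le_one)),
    setIntegral_congr_fun measurableSet_Ioi fun u hu => expGap_of_lt hu, integral_exp_neg_Ioi]
  have h : ∫ u in (0 : ℝ)..1, expGap u ≤ ∫ u in (0 : ℝ)..1, u :=
    intervalIntegral.integral_mono_on zero_le_one
      ((intervalIntegrable_iff_integrableOn_Ioc_of_le zero_le_one).2
        (integrableOn_expGap.mono_set Ioc_subset_Ioi_self))
      intervalIntegral.intervalIntegrable_id fun u hu => expGap_le_self hu.1 hu.2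
  rw [integral_id] at h
  linarith [exp_neg_one_lt_d9]

lemma integral_expGap_div_le : ∫ u in Ioi (0 : ℝ), expGap u / u ≤ 1.016 := by
  rw [← intervalIntegral.integral_interval_add_Ioi integrableOn_expGap_div
    (integrableOn_expGap_div.mono_set (Ioi_subset_Ioi zero_le_one)),
    intervalIntegral.integral_congr (g := fun u => (1 - exp (-u)) / u) fun u hu => by
      rw [uIcc_of_le zero_le_one] at hu
      simp only [expGap_of_le hu.1 hu.2],
    setIntegral_congr_fun (g := fun u => exp (-u) / u) measurableSet_Ioi fun u hu => by
      simp only [expGap_of_lt hu]]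
  linarith [integral_one_sub_exp_neg_div_le, integral_exp_neg_div_Ioi_one_le]

lemma expGap_rpow {p r : ℝ} (hp : 0 < p) (hr : 0 ≤ r) :
    expGap (r ^ p) = |(Iic (1 : ℝ)).indicator 1 r - exp (-(r ^ p))| := by
  have h : r ^ p ∈ Iic (1 : ℝ) ↔ r ∈ Iic 1 := by
    rw [mem_Iic, mem_Iic, ← rpow_le_rpow_iff hr zero_le_one hp, one_rpow]
  by_cases hr₁ : r ∈ Iic (1 : ℝ)
  · rw [expGap, indicator_of_mem hr₁, indicator_of_mem (h.2 hr₁), Pi.one_apply, Pi.one_apply]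
  · rw [expGap, indicator_of_notMem hr₁, indicator_of_notMem (mt h.1 hr₁)]

end ExpGap

lemma integral_cos_mul_indicator {s : ℝ} (hs : s ≠ 0) :
    ∫ r in Ioi (0 : ℝ), cos (s * r) * (Iic (1 : ℝ)).indicator 1 r = sin s / s := by
  have h : (fun r => cos (s * r) * (Iic (1 : ℝ)).indicator 1 r) =
      (Iic (1 : ℝ)).indicator fun r => cos (s * r) := by
    ext r
    simp [indicator_apply]
  rw [h, setIntegral_indicator measurableSet_Iic, Ioi_inter_Iic,
    ← intervalIntegral.integral_of_le zero_le_one,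
    intervalIntegral.integral_comp_mul_left (fun r => cos r) hs, integral_cos]
  simp [div_eq_inv_mul]

lemma abs_sin_div_sub_integral_le {p s : ℝ} (hp : 0 < p) (hs : s ≠ 0) :
    |sin s / s - ∫ r in Ioi (0 : ℝ), cos (s * r) * exp (-(r ^ p))| ≤
      ∫ r in Ioi (0 : ℝ), expGap (r ^ p) := by
  have hind : IntegrableOn ((Iic (1 : ℝ)).indicator 1) (Ioi 0) :=
    integrableOn_Ioi_zero_of_le_one_of_le_exp_neg (measurable_const.indicator measurableSet_Iic)
      (fun u hu => by rw [indicator_of_mem (mem_Iic.2 hu.2)]; simp)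
      (fun u hu => by rw [indicator_of_notMem (notMem_Iic.2 hu)]; simp [(exp_pos _).le])
  have hexp : IntegrableOn (fun r : ℝ => exp (-(r ^ p))) (Ioi 0) := by
    simpa using integrableOn_rpow_mul_exp_neg_rpow (s := 0) (by norm_num) hp
  have hcos : ∀ {g : ℝ → ℝ}, IntegrableOn g (Ioi 0) →
      IntegrableOn (fun r => cos (s * r) * g r) (Ioi 0) := fun hg =>
    hg.bdd_mul (c := 1) (by fun_prop) (ae_of_all _ fun r => abs_cos_le_one _)
  have hgap : IntegrableOn (fun r : ℝ => expGap (r ^ p)) (Ioi 0) :=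
    IntegrableOn.congr_fun (hind.sub hexp).abs (fun r hr => (expGap_rpow hp (le_of_lt hr)).symm)
      measurableSet_Ioi
  calc |sin s / s - ∫ r in Ioi (0 : ℝ), cos (s * r) * exp (-(r ^ p))|
      = ‖∫ r in Ioi (0 : ℝ), cos (s * r) * ((Iic (1 : ℝ)).indicator 1 r - exp (-(r ^ p)))‖ := by
        simp_rw [mul_sub]
        rw [integral_sub (hcos hind) (hcos hexp), integral_cos_mul_indicator hs, Real.norm_eq_abs]
    _ ≤ ∫ r in Ioi (0 : ℝ), expGap (r ^ p) := by
        refine norm_integral_le_of_norm_le hgap ((ae_restrict_iff' measurableSet_Ioi).2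
          (Eventually.of_forall fun r hr => ?_))
        rw [norm_mul, expGap_rpow hp (le_of_lt hr), Real.norm_eq_abs, Real.norm_eq_abs]
        exact mul_le_of_le_one_left (abs_nonneg _) (abs_cos_le_one _)

theorem stmt9 (p s : ℝ) (hp : 2 ≤ p) (hs : 0 < s) :
    |Real.sin s / s - ∫ r in Set.Ioi (0 : ℝ), Real.cos (s * r) * Real.exp (-(r ^ p))| ≤
      1.016 / p := by
  have hp₁ : 1 ≤ p := by linarith
  calc _ ≤ ∫ r in Ioi (0 : ℝ), expGap (r ^ p) :=
        abs_sin_div_sub_integral_le (zero_lt_one.trans_le hp₁) hs.ne'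
    _ ≤ p⁻¹ * ((1 - p⁻¹) * (∫ u in Ioi (0 : ℝ), expGap u / u) +
          p⁻¹ * ∫ u in Ioi (0 : ℝ), expGap u) :=
        integral_comp_rpow_Ioi_le hp₁ (fun u _ => expGap_nonneg u) integrableOn_expGap
          integrableOn_expGap_div
    _ ≤ p⁻¹ * ((1 - p⁻¹) * 1.016 + p⁻¹ * 1.016) := by
        gcongr
        exacts [sub_nonneg.2 (inv_le_one_of_one_le₀ hp₁), integral_expGap_div_le,
          integral_expGap_le]
    _ = 1.016 / p := by ring
end

section
/- Let F_sinc(x) = λ{ s > 0 : |sin(s)/s| > x } be the distribution function (Lebesgue measure of the superlevel set) of |sin(s)/s| on (0,∞). Then for every 0 < x < 1/(2π), F_sinc(x) ≥ (2/π)·(1/x) − 27/16. -/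
/-!
On `(nπ/2, (n+1)π/2)` we have `x s < (n+1)h` with `h = πx/2`, and `|sin s|` exceeds `(n+1)h` on
an interval of length `arccos ((n+1)h)`; so `F_sinc x ≥ ∑ₙ arccos ((n+1)h)`.
The function `arccosTail u = √(1-u²) - u arccos u` (which is `∫_u^1 arccos` for `|u| ≤ 1`) has
derivative `-arccos u` on `(-1,1)`, equals `1` at `0` and vanishes on `[1,∞)`; since `arccos` is
antitone, telescoping it along the grid `h ℕ` gives `h ∑_{i ≥ 0} arccos (i h) ≥ 1`, i.e.
`F_sinc x ≥ 1/h - π/2 = 2/(πx) - π/2`, and `π/2 < 27/16`.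
-/

open Real MeasureTheory Set

noncomputable def Fsinc (x : ℝ) : ℝ :=
  (volume {s : ℝ | 0 < s ∧ x < |Real.sin s / s|}).toReal

noncomputable def arccosTail (u : ℝ) : ℝ := √(1 - u ^ 2) - u * arccos u

lemma hasDerivAt_arccosTail {u : ℝ} (h₀ : -1 < u) (h₁ : u < 1) :
    HasDerivAt arccosTail (-arccos u) u := by
  have hpos : 0 < 1 - u ^ 2 := by nlinarith
  have hsqrt : HasDerivAt (fun u : ℝ => √(1 - u ^ 2)) ((0 - 2 * u) / (2 * √(1 - u ^ 2))) u :=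
    (((hasDerivAt_pow 2 u).const_sub 1).congr_deriv (by ring)).sqrt hpos.ne'
  refine (hsqrt.sub ((hasDerivAt_id' u).mul (hasDerivAt_arccos h₀.ne' h₁.ne))).congr_deriv ?_
  have : √(1 - u ^ 2) ≠ 0 := (sqrt_pos.2 hpos).ne'
  field_simp
  ring

lemma continuous_arccosTail : Continuous arccosTail :=
  ((continuous_const.sub (continuous_pow 2)).sqrt).sub (continuous_id.mul continuous_arccos)

lemma arccosTail_zero : arccosTail 0 = 1 := by simp [arccosTail]

lemma arccosTail_of_one_le {u : ℝ} (hu : 1 ≤ u) : arccosTail u = 0 := by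
  simp [arccosTail, arccos_of_one_le hu, sqrt_eq_zero_of_nonpos (by nlinarith : 1 - u ^ 2 ≤ 0)]

lemma arccosTail_sub_le_of_le_one {a b : ℝ} (ha : 0 ≤ a) (hab : a ≤ b) (hb : b ≤ 1) :
    arccosTail a - arccosTail b ≤ (b - a) * arccos a := by
  have hderiv : ∀ u ∈ interior (Icc a 1), HasDerivAt arccosTail (-arccos u) u := by
    rw [interior_Icc]
    exact fun u hu => hasDerivAt_arccosTail (by linarith [hu.1]) hu.2
  have := (convex_Icc a 1).mul_sub_le_image_sub_of_le_deriv (C := -arccos a)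
    continuous_arccosTail.continuousOn
    (fun u hu => (hderiv u hu).differentiableAt.differentiableWithinAt)
    (fun u hu => (hderiv u hu).deriv ▸ neg_le_neg (arccos_le_arccos (interior_subset hu).1))
    a ⟨le_rfl, hab.trans hb⟩ b ⟨hab, hb⟩ hab
  linarith

lemma arccosTail_sub_le {a b : ℝ} (ha : 0 ≤ a) (hab : a ≤ b) :
    arccosTail a - arccosTail b ≤ (b - a) * arccos a := by
  rcases le_total 1 a with ha1 | ha1
  · simp [arccosTail_of_one_le ha1, arccosTail_of_one_le (ha1.trans hab), arccos_of_one_le ha1]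
  rcases le_total b 1 with hb1 | hb1
  · exact arccosTail_sub_le_of_le_one ha hab hb1
  calc arccosTail a - arccosTail b = arccosTail a - arccosTail 1 := by
        rw [arccosTail_of_one_le hb1, arccosTail_of_one_le le_rfl]
    _ ≤ (1 - a) * arccos a := arccosTail_sub_le_of_le_one ha ha1 le_rfl
    _ ≤ (b - a) * arccos a := by gcongr; exact arccos_nonneg a

lemma one_le_mul_sum_arccos {h : ℝ} (hh : 0 < h) {N : ℕ} (hN : 1 ≤ N * h) :
    1 ≤ h * ∑ i ∈ Finset.range N, arccos (i * h) := by
  calc (1 : ℝ) = arccosTail ((0 : ℕ) * h) - arccosTail (N * h) := by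
        simp [arccosTail_zero, arccosTail_of_one_le hN]
    _ = ∑ i ∈ Finset.range N, (arccosTail (i * h) - arccosTail ((i + 1 : ℕ) * h)) :=
        (Finset.sum_range_sub' (fun i : ℕ => arccosTail (i * h)) N).symm
    _ ≤ ∑ i ∈ Finset.range N, h * arccos (i * h) := by
        refine Finset.sum_le_sum fun i _ => ?_
        have := arccosTail_sub_le (a := i * h) (b := (i + 1 : ℕ) * h) (by positivity)
          (by push_cast; linarith)
        push_cast at this ⊢
        linarith
    _ = h * ∑ i ∈ Finset.range N, arccos (i * h) := (Finset.mul_sum ..).symm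

lemma lt_sin_of_mem_Ioo_arcsin {c t : ℝ} (ht : t ∈ Ioo (arcsin c) (π - arcsin c)) :
    c < sin t := by
  have hlow := neg_pi_div_two_le_arcsin c
  rcases le_total t (π / 2) with h | h
  · exact (arcsin_lt_iff_lt_sin' ⟨by linarith [ht.1], h⟩).1 ht.1
  · rw [← sin_pi_sub]
    exact (arcsin_lt_iff_lt_sin' ⟨by linarith [ht.2, pi_pos], by linarith⟩).1 (by linarith [ht.2])

/-- `|sin|` increases on `(nπ/2, (n+1)π/2)` for even `n` and decreases for odd `n`, so this is
the part of that interval where `|sin| > (n+1) h`. -/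
noncomputable def sincPiece (h : ℝ) (n : ℕ) : Set ℝ :=
  if Even n then Ioo (n * (π / 2) + arcsin ((n + 1) * h)) ((n + 1) * (π / 2))
  else Ioo (n * (π / 2)) ((n + 1) * (π / 2) - arcsin ((n + 1) * h))

lemma measurableSet_sincPiece (h : ℝ) (n : ℕ) : MeasurableSet (sincPiece h n) := by
  unfold sincPiece
  split_ifs <;> exact measurableSet_Ioo

lemma volume_sincPiece (h : ℝ) (n : ℕ) :
    volume (sincPiece h n) = ENNReal.ofReal (arccos ((n + 1) * h)) := by
  unfold sincPiece
  split_ifs <;> rw [volume_Ioo, arccos_eq_pi_div_two_sub_arcsin] <;> ring_nf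

lemma sincPiece_subset_Ioo {h : ℝ} (hh : 0 ≤ h) (n : ℕ) :
    sincPiece h n ⊆ Ioo (n * (π / 2)) ((n + 1) * (π / 2)) := by
  have : 0 ≤ arcsin ((n + 1) * h) := arcsin_nonneg.2 (by positivity)
  unfold sincPiece
  split_ifs
  · exact Ioo_subset_Ioo (by linarith) le_rfl
  · exact Ioo_subset_Ioo le_rfl (by linarith)

lemma exists_sub_mul_pi_mem_of_mem_sincPiece {h s : ℝ} {n : ℕ} (hs : s ∈ sincPiece h n) :
    ∃ k : ℕ, s - k * π ∈ Ioo (arcsin ((n + 1) * h)) (π - arcsin ((n + 1) * h)) := by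
  have := arcsin_le_pi_div_two ((n + 1) * h)
  obtain ⟨k, rfl | rfl⟩ := n.even_or_odd'
  · simp only [sincPiece, even_two_mul, if_true, mem_Ioo] at hs
    refine ⟨k, ?_, ?_⟩ <;> push_cast at hs ⊢ <;> linarith [hs.1, hs.2]
  · simp only [sincPiece, Nat.not_even_two_mul_add_one, if_false, mem_Ioo] at hs
    refine ⟨k, ?_, ?_⟩ <;> push_cast at hs ⊢ <;> linarith [hs.1, hs.2]

lemma sincPiece_subset {x : ℝ} (hx : 0 < x) (n : ℕ) :
    sincPiece (π * x / 2) n ⊆ {s : ℝ | 0 < s ∧ x < |sin s / s|} := by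
  intro s hs
  obtain ⟨hlo, hhi⟩ := sincPiece_subset_Ioo (by positivity) n hs
  have hs₀ : 0 < s := lt_of_le_of_lt (by positivity) hlo
  obtain ⟨k, hk⟩ := exists_sub_mul_pi_mem_of_mem_sincPiece hs
  have hsin : (n + 1) * (π * x / 2) < |sin s| := by
    calc (n + 1) * (π * x / 2) < sin (s - k * π) := lt_sin_of_mem_Ioo_arcsin hk
      _ ≤ |sin (s - k * π)| := le_abs_self _
      _ = |sin s| := by simp [sin_sub_nat_mul_pi, abs_mul]
  refine ⟨hs₀, ?_⟩
  rw [abs_div, abs_of_pos hs₀, lt_div_iff₀ hs₀]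
  nlinarith

lemma sinc_superlevel_subset_Ioo {x : ℝ} (hx : 0 < x) :
    {s : ℝ | 0 < s ∧ x < |sin s / s|} ⊆ Ioo 0 (1 / x) := by
  rintro s ⟨hs₀, hsx⟩
  refine ⟨hs₀, ?_⟩
  have : |sin s / s| ≤ 1 / s := by
    rw [abs_div, abs_of_pos hs₀]
    gcongr
    exact abs_sin_le_one s
  rw [lt_div_iff₀ hx]
  have := (lt_div_iff₀ hs₀).1 (hsx.trans_le this)
  linarith

lemma sum_arccos_le_Fsinc {x : ℝ} (hx : 0 < x) (N : ℕ) :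
    ∑ n ∈ Finset.range N, arccos ((n + 1) * (π * x / 2)) ≤ Fsinc x := by
  have hfin : volume {s : ℝ | 0 < s ∧ x < |sin s / s|} ≠ ⊤ :=
    ne_top_of_le_ne_top (by simp) (measure_mono (sinc_superlevel_subset_Ioo hx))
  have hdisj : (Finset.range N : Set ℕ).PairwiseDisjoint (sincPiece (π * x / 2)) := by
    refine fun i _ j _ hij => Disjoint.mono (sincPiece_subset_Ioo (by positivity) i)
      (sincPiece_subset_Ioo (by positivity) j) ?_
    have := (monotone_id.mul_const (by positivity : (0 : ℝ) ≤ π / 2)).comp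
      Nat.mono_cast |>.pairwise_disjoint_on_Ioo_succ hij
    simpa [Function.onFun] using this
  rw [Fsinc, ← ENNReal.ofReal_le_iff_le_toReal hfin,
    ENNReal.ofReal_sum_of_nonneg fun n _ => arccos_nonneg _]
  calc ∑ n ∈ Finset.range N, ENNReal.ofReal (arccos ((n + 1) * (π * x / 2)))
      = volume (⋃ n ∈ Finset.range N, sincPiece (π * x / 2) n) := by
        rw [measure_biUnion_finset hdisj fun n _ => measurableSet_sincPiece _ n]
        simp only [volume_sincPiece]
    _ ≤ _ := measure_mono (iUnion₂_subset fun n _ => sincPiece_subset hx n)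

theorem stmt12_general (x : ℝ) (hx0 : 0 < x) :
    (2 / π) * (1 / x) - 27 / 16 ≤ Fsinc x := by
  set h := π * x / 2 with h_def
  have hh : 0 < h := by positivity
  set N := ⌈1 / h⌉₊
  have hN : 1 ≤ ((N + 1 : ℕ) : ℝ) * h := by
    have := (div_le_iff₀ hh).1 (Nat.le_ceil (1 / h))
    push_cast
    linarith
  have hsum : 1 ≤ h * (∑ n ∈ Finset.range N, arccos ((n + 1) * h) + π / 2) := by
    simpa [Finset.sum_range_succ', arccos_zero] using one_le_mul_sum_arccos hh hN
  have hF : ∑ n ∈ Finset.range N, arccos ((n + 1) * h) ≤ Fsinc x := sum_arccos_le_Fsinc hx0 N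
  have hrecip : 2 / π * (1 / x) = 1 / h := by rw [h_def]; field_simp
  have hpi : π / 2 ≤ 27 / 16 := by linarith [pi_lt_d2]
  have : 1 / h ≤ Fsinc x + π / 2 := by
    rw [div_le_iff₀ hh]
    nlinarith
  linarith

theorem stmt12 (x : ℝ) (hx0 : 0 < x) (hx : x < 1 / (2 * π)) :
    (2 / π) * (1 / x) - 27 / 16 ≤ Fsinc x :=
  stmt12_general x hx0
end
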